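/- arXiv:2403.15350 — 5 statements merged into one kernel-verified Lean document; each statement's English description precedes it below -/
import Mathlib

section
/- For any pair of complex numbers z, z' and any real α ≥ 1, the identity |z|^{α-1} z - |z'|^{α-1} z' = ((α+1)/2) (∫₀¹ |Z_λ|^{α-1} dλ)(z - z') + ((α-1)/2) (∫₀¹ |Z_λ|^{α-3} Z_λ² dλ) · conj(z - z') holds, where Z_λ := λz + (1-λ)z'. -/
/-!
The map `Φ w = |w|^(α-1) w` is real-differentiable with
`DΦ(w) h = |w|^(α-1) h + (α-1) |w|^(α-3) ⟪w, h⟫ w`; at `w = 0` this is `0`, because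
`|Φ h| = |h|^α = o(|h|)` for `α > 1`. On `ℂ`, `⟪w, h⟫ w = (|w|² h + w² conj h) / 2`, which turns
`DΦ(w) h` into `((α+1)/2) |w|^(α-1) h + ((α-1)/2) |w|^(α-3) w² conj h`. For `α > 1` both
coefficients are continuous in `w` (the second has modulus `|w|^(α-1)`), so the identity is the
fundamental theorem of calculus for `λ ↦ Φ (Z_λ)`.
-/

open Complex ComplexConjugate Asymptotics Topology Filter MeasureTheory

section NormRpowSmul

variable {E : Type*} [NormedAddCommGroup E]

theorem hasFDerivAt_norm_rpow_smul_self_zero [NormedSpace ℝ E] {α : ℝ} (hα : 1 < α) :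
    HasFDerivAt (fun x : E => ‖x‖ ^ (α - 1) • x) (0 : E →L[ℝ] E) 0 := by
  refine .of_isLittleO ?_
  have h0 : Tendsto (fun x : E => ‖x‖ ^ (α - 1)) (𝓝 0) (𝓝 0) := by
    have := (continuousAt_id (x := (0 : E))).norm.rpow_const (.inr (sub_pos.mpr hα).le)
    simpa [(sub_pos.mpr hα).ne'] using this.tendsto
  simpa using (isLittleO_one_iff ℝ |>.mpr h0).smul_isBigO (isBigO_refl (fun x : E => x) _)

variable [InnerProductSpace ℝ E]

theorem hasFDerivAt_norm_rpow_smul_self_of_ne_zero (α : ℝ) {x : E} (hx : x ≠ 0) :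
    HasFDerivAt (fun x : E => ‖x‖ ^ (α - 1) • x)
      (‖x‖ ^ (α - 1) • ContinuousLinearMap.id ℝ E
        + (((α - 1) * ‖x‖ ^ (α - 3)) • innerSL ℝ x).smulRight x) x := by
  have hnorm : HasFDerivAt (fun x : E => ‖x‖ ^ (α - 1))
      (((α - 1) * ‖x‖ ^ (α - 3)) • innerSL ℝ x) x := by
    convert ((hasStrictFDerivAt_norm_sq x).rpow_const (p := (α - 1) / 2)
      (by simp [hx])).hasFDerivAt using 1
    · funext y
      rw [← Real.rpow_natCast_mul (norm_nonneg _)]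
      ring_nf
    · rw [← Real.rpow_natCast_mul (norm_nonneg _), ← Nat.cast_smul_eq_nsmul ℝ, smul_smul]
      ring_nf
  exact hnorm.smul (hasFDerivAt_id x)

theorem hasFDerivAt_norm_rpow_smul_self {α : ℝ} (hα : 1 < α) (x : E) :
    HasFDerivAt (fun x : E => ‖x‖ ^ (α - 1) • x)
      (‖x‖ ^ (α - 1) • ContinuousLinearMap.id ℝ E
        + (((α - 1) * ‖x‖ ^ (α - 3)) • innerSL ℝ x).smulRight x) x := by
  rcases eq_or_ne x 0 with rfl | hx
  · simpa [(sub_pos.mpr hα).ne'] using hasFDerivAt_norm_rpow_smul_self_zero (E := E) hα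
  · exact hasFDerivAt_norm_rpow_smul_self_of_ne_zero α hx

end NormRpowSmul

theorem Real.rpow_sub_three_mul_sq {x α : ℝ} (hx : 0 ≤ x) (hα : α ≠ 1) :
    x ^ (α - 3) * x ^ 2 = x ^ (α - 1) := by
  rw [← Real.rpow_natCast, ← Real.rpow_add' hx (by norm_num [sub_add, sub_eq_zero, hα])]
  ring_nf

namespace Complex

theorem real_inner_mul_self (Z w : ℂ) :
    (inner ℝ Z w : ℂ) * Z = ((‖Z‖ : ℂ) ^ 2 * w + Z ^ 2 * conj w) / 2 := by
  rw [Complex.inner, re_eq_add_conj, map_mul, conj_conj, ← mul_conj']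
  ring

theorem norm_rpow_sub_three_mul_sq {α : ℝ} (hα : α ≠ 1) (Z : ℂ) :
    ‖((‖Z‖ ^ (α - 3) : ℝ) : ℂ) * Z ^ 2‖ = ‖Z‖ ^ (α - 1) := by
  rw [norm_mul, norm_pow, norm_real, Real.norm_of_nonneg (by positivity),
    Real.rpow_sub_three_mul_sq (norm_nonneg Z) hα]

theorem continuous_norm_rpow_sub_three_mul_sq {α : ℝ} (hα : 1 < α) :
    Continuous fun Z : ℂ => ((‖Z‖ ^ (α - 3) : ℝ) : ℂ) * Z ^ 2 := by
  refine continuous_iff_continuousAt.mpr fun Z => ?_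
  rcases eq_or_ne Z 0 with rfl | hZ
  · have h : ContinuousAt (fun Z : ℂ => ‖Z‖ ^ (α - 1)) 0 := by
      fun_prop (disch := exact .inr (sub_pos.mpr hα).le)
    simp only [ContinuousAt, norm_zero, Real.zero_rpow (sub_pos.mpr hα).ne', ne_eq,
      OfNat.ofNat_ne_zero, not_false_eq_true, zero_pow, mul_zero] at h ⊢
    rw [tendsto_zero_iff_norm_tendsto_zero]
    simpa only [norm_rpow_sub_three_mul_sq hα.ne'] using h
  · have hnorm : ContinuousAt (fun Z : ℂ => ‖Z‖ ^ (α - 3)) Z :=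
      continuous_norm.continuousAt.rpow_const (.inl (norm_ne_zero_iff.mpr hZ))
    exact (continuous_ofReal.continuousAt.comp hnorm).mul (continuousAt_id.pow 2)

theorem norm_rpow_smul_self_fderiv_apply {α : ℝ} (hα : α ≠ 1) (Z w : ℂ) :
    (‖Z‖ ^ (α - 1) • ContinuousLinearMap.id ℝ ℂ
        + (((α - 1) * ‖Z‖ ^ (α - 3)) • innerSL ℝ Z).smulRight Z) w
      = ((α + 1) / 2 : ℝ) * ((‖Z‖ ^ (α - 1) : ℝ) : ℂ) * w
        + ((α - 1) / 2 : ℝ) * (((‖Z‖ ^ (α - 3) : ℝ) : ℂ) * Z ^ 2) * conj w := by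
  have hpow : ((‖Z‖ ^ (α - 3) : ℝ) : ℂ) * (‖Z‖ : ℂ) ^ 2 = ((‖Z‖ ^ (α - 1) : ℝ) : ℂ) := by
    exact_mod_cast Real.rpow_sub_three_mul_sq (norm_nonneg Z) hα
  simp only [_root_.add_apply, _root_.smul_apply,
    ContinuousLinearMap.id_apply, ContinuousLinearMap.smulRight_apply, innerSL_apply_apply,
    smul_eq_mul, real_smul]
  push_cast
  linear_combination (α - 1 : ℂ) * (‖Z‖ ^ (α - 3) : ℝ) * real_inner_mul_self Z w
    + (α - 1) / 2 * w * hpow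

end Complex

/-- The mean-value identity for the power nonlinearity: for `z, z' ∈ ℂ` and real `α ≥ 1`,
`|z|^{α-1} z - |z'|^{α-1} z' = ((α+1)/2)(∫₀¹ |Z_λ|^{α-1} dλ)(z-z')
  + ((α-1)/2)(∫₀¹ |Z_λ|^{α-3} Z_λ² dλ) conj(z-z')`,
where `Z_λ = λ z + (1-λ) z'` (and `|Z|^{α-3} Z²` is interpreted as `0` when `Z = 0`,
which is the convention of `Real.rpow` since `0^x = 0` for `x ≠ 0`). -/
theorem power_nonlinearity_mvt (z z' : ℂ) (α : ℝ) (hα : 1 ≤ α) :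
    (‖z‖ ^ (α - 1) : ℝ) * z - (‖z'‖ ^ (α - 1) : ℝ) * z' =
      ((α + 1) / 2 : ℝ) *
        (∫ l in (0:ℝ)..1, ((‖l * z + (1 - l) * z'‖ ^ (α - 1) : ℝ) : ℂ)) *
        (z - z')
      + ((α - 1) / 2 : ℝ) *
        (∫ l in (0:ℝ)..1,
          ((‖l * z + (1 - l) * z'‖ ^ (α - 3) : ℝ) : ℂ) *
            (l * z + (1 - l) * z') ^ 2) *
        (starRingEnd ℂ) (z - z') := by
  rcases hα.eq_or_lt with rfl | hα
  · norm_num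
  set γ : ℝ → ℂ := fun l => l * z + (1 - l) * z'
  have hγ (l : ℝ) : HasDerivAt γ (z - z') l := by
    rw [show γ = fun t : ℝ => z' + (t : ℂ) * (z - z') by funext t; simp only [γ]; ring]
    simpa using ((hasDerivAt_id l).ofReal_comp.mul_const (z - z')).const_add z'
  have hγc : Continuous γ := by fun_prop
  have hΦγ (l : ℝ) : HasDerivAt (fun l => ‖γ l‖ ^ (α - 1) • γ l)
      (((α + 1) / 2 : ℝ) * ((‖γ l‖ ^ (α - 1) : ℝ) : ℂ) * (z - z')
        + ((α - 1) / 2 : ℝ) * (((‖γ l‖ ^ (α - 3) : ℝ) : ℂ) * γ l ^ 2) * conj (z - z')) l := by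
    rw [← Complex.norm_rpow_smul_self_fderiv_apply hα.ne']
    exact (hasFDerivAt_norm_rpow_smul_self hα (γ l)).comp_hasDerivAt l (hγ l)
  have h₁ : Continuous fun l => ((‖γ l‖ ^ (α - 1) : ℝ) : ℂ) := by
    fun_prop (disch := linarith)
  have h₂ : Continuous fun l => ((‖γ l‖ ^ (α - 3) : ℝ) : ℂ) * γ l ^ 2 :=
    (Complex.continuous_norm_rpow_sub_three_mul_sq hα).comp hγc
  have hI₁ := (h₁.intervalIntegrable (μ := volume) 0 1).const_mul (((α + 1) / 2 : ℝ) : ℂ)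
    |>.mul_const (z - z')
  have hI₂ := (h₂.intervalIntegrable (μ := volume) 0 1).const_mul (((α - 1) / 2 : ℝ) : ℂ)
    |>.mul_const (conj (z - z'))
  have hFTC := intervalIntegral.integral_eq_sub_of_hasDerivAt (fun l _ => hΦγ l) (hI₁.add hI₂)
  rw [intervalIntegral.integral_add hI₁ hI₂,
    intervalIntegral.integral_mul_const, intervalIntegral.integral_mul_const,
    intervalIntegral.integral_const_mul, intervalIntegral.integral_const_mul] at hFTC
  simpa [γ, Complex.real_smul] using hFTC.symm
end

section
/- For any complex numbers z, z' and any real α ≥ 1, one has | |z|^{α-1} z - |z'|^{α-1} z' | ≤ 2^{α+1} α (|z|^{α-1} + |z'|^{α-1}) |z - z'|. -/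
/-!
With `β = α - 1` and `‖z'‖ ≤ ‖z‖`, write `‖z‖^β z - ‖z'‖^β z' = ‖z‖^β (z - z') + (‖z‖^β - ‖z'‖^β) z'`.
The mean value theorem bounds the second term by `β ‖z‖^β ‖z - z'‖`, so the difference is at most
`α ‖z‖^β ‖z - z'‖`, already sharper than the stated bound.
-/

theorem rpow_sub_rpow_mul_le {a b β : ℝ} (hb : 0 ≤ b) (hba : b ≤ a) (hβ : 0 ≤ β) :
    (a ^ β - b ^ β) * b ≤ β * a ^ β * (a - b) := by
  rcases hb.eq_or_lt with rfl | hb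
  · simp only [mul_zero, sub_zero]
    have : 0 ≤ a := hba
    positivity
  rcases hba.eq_or_lt with rfl | hba
  · simp
  obtain ⟨c, ⟨hbc, hca⟩, hc⟩ := exists_hasDerivAt_eq_slope (fun x : ℝ => x ^ β)
    (fun x => β * x ^ (β - 1)) hba
    (fun x hx =>
      (Real.continuousAt_rpow_const x β (Or.inl (hb.trans_le hx.1).ne')).continuousWithinAt)
    (fun x hx => Real.hasDerivAt_rpow_const (Or.inl (hb.trans hx.1).ne'))
  have hc0 : 0 < c := hb.trans hbc
  have hmvt : a ^ β - b ^ β = β * c ^ (β - 1) * (a - b) := by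
    rw [hc]; field_simp [(sub_pos.2 hba).ne']
  have hcb : c ^ (β - 1) * b ≤ c ^ β := by
    calc c ^ (β - 1) * b ≤ c ^ (β - 1) * c := by gcongr
      _ = c ^ β := by rw [← Real.rpow_add_one hc0.ne', sub_add_cancel]
  calc (a ^ β - b ^ β) * b = β * (c ^ (β - 1) * b) * (a - b) := by rw [hmvt]; ring
    _ ≤ β * c ^ β * (a - b) := by gcongr
    _ ≤ β * a ^ β * (a - b) := by gcongr

section NormedSpace

variable {E : Type*} [SeminormedAddCommGroup E] [NormedSpace ℝ E]

theorem norm_rpow_smul_sub_rpow_smul_le_of_norm_le {x y : E} {β : ℝ} (hβ : 0 ≤ β)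
    (hyx : ‖y‖ ≤ ‖x‖) :
    ‖‖x‖ ^ β • x - ‖y‖ ^ β • y‖ ≤ (1 + β) * ‖x‖ ^ β * ‖x - y‖ := by
  have hpow : ‖y‖ ^ β ≤ ‖x‖ ^ β := by gcongr
  have hsplit : ‖x‖ ^ β • x - ‖y‖ ^ β • y = ‖x‖ ^ β • (x - y) + (‖x‖ ^ β - ‖y‖ ^ β) • y := by
    rw [smul_sub, sub_smul]; abel
  calc ‖‖x‖ ^ β • x - ‖y‖ ^ β • y‖
      ≤ ‖x‖ ^ β * ‖x - y‖ + (‖x‖ ^ β - ‖y‖ ^ β) * ‖y‖ := by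
        rw [hsplit]
        refine (norm_add_le _ _).trans_eq ?_
        rw [norm_smul, norm_smul, Real.norm_of_nonneg (by positivity),
          Real.norm_of_nonneg (sub_nonneg.2 hpow)]
    _ ≤ ‖x‖ ^ β * ‖x - y‖ + β * ‖x‖ ^ β * (‖x‖ - ‖y‖) := by
        grw [rpow_sub_rpow_mul_le (norm_nonneg y) hyx hβ]
    _ ≤ ‖x‖ ^ β * ‖x - y‖ + β * ‖x‖ ^ β * ‖x - y‖ := by
        gcongr; exact norm_sub_norm_le x y
    _ = (1 + β) * ‖x‖ ^ β * ‖x - y‖ := by ring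

theorem norm_rpow_smul_sub_rpow_smul_le (x y : E) {β : ℝ} (hβ : 0 ≤ β) :
    ‖‖x‖ ^ β • x - ‖y‖ ^ β • y‖ ≤ (1 + β) * (‖x‖ ^ β + ‖y‖ ^ β) * ‖x - y‖ := by
  wlog hyx : ‖y‖ ≤ ‖x‖ generalizing x y
  · rw [norm_sub_rev, norm_sub_rev x, add_comm (‖x‖ ^ β)]
    exact this y x (le_of_not_ge hyx)
  calc ‖‖x‖ ^ β • x - ‖y‖ ^ β • y‖ ≤ (1 + β) * ‖x‖ ^ β * ‖x - y‖ :=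
        norm_rpow_smul_sub_rpow_smul_le_of_norm_le hβ hyx
    _ ≤ (1 + β) * (‖x‖ ^ β + ‖y‖ ^ β) * ‖x - y‖ := by
        gcongr; exact le_add_of_nonneg_right (by positivity)

end NormedSpace

/-- For complex `z, z'` and real `α ≥ 1`,
`| |z|^{α-1} z - |z'|^{α-1} z' | ≤ 2^{α+1} α (|z|^{α-1} + |z'|^{α-1}) |z - z'|`. -/
theorem power_nonlinearity_diff_bound (z z' : ℂ) (α : ℝ) (hα : 1 ≤ α) :
    ‖(‖z‖ ^ (α - 1) : ℝ) * z - (‖z'‖ ^ (α - 1) : ℝ) * z'‖ ≤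
      2 ^ (α + 1) * α * (‖z‖ ^ (α - 1) + ‖z'‖ ^ (α - 1)) *
        ‖z - z'‖ := by
  have h := norm_rpow_smul_sub_rpow_smul_le z z' (sub_nonneg.2 hα)
  rw [add_sub_cancel, Complex.real_smul, Complex.real_smul] at h
  refine h.trans ?_
  have h2pow : (1 : ℝ) ≤ 2 ^ (α + 1) := Real.one_le_rpow one_le_two (by linarith)
  gcongr
  exact le_mul_of_one_le_left (by linarith) h2pow
end

section
/- For 0 < s < 1 and any k₁ ∈ ℝ, k₂ ≥ 0, the double integral J(k₁, k₂, s) := ∫₀^∞ ∫₀^∞ |e^{i k₁ z₁ - k₂ z₂} - 1|² / (z₁² + z₂²)^{1+s} dz₁ dz₂ is finite and satisfies J(k₁, k₂, s) ≤ C_s (k₁² + k₂²)^s for a constant C_s depending only on s. -/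
/-!
With `w = i k₁ z₁ - k₂ z₂` we have `Re w ≤ 0`, hence `|e^w - 1| ≤ 2 min(1, |w|)`, and
`|w|² ≤ K |z|²` for `K = k₁² + k₂²`. So the integrand is at most
`4 min(1, K |z|²) / |z|^{2+2s} = 4 K^{1+s} φ(K |z|²)`, where `φ(u) = min(1, u) / u^{1+s}`.
The radial function `φ(|z|²)` behaves like `|z|^{-2s}` near the origin and like `|z|^{-2-2s}` at
infinity, so it is integrable on the whole plane precisely because `0 < s < 1`; the substitution
`z ↦ √K z` turns the integral of `K^{1+s} φ(K |z|²)` into `K^s ∫ φ(|z|²)`.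
-/

open MeasureTheory Set Complex

noncomputable def kernelProfile (s u : ℝ) : ℝ :=
  min 1 u / u ^ (1 + s)

@[simp]
lemma kernelProfile_zero (s : ℝ) : kernelProfile s 0 = 0 := by
  simp [kernelProfile]

lemma kernelProfile_nonneg (s : ℝ) {u : ℝ} (hu : 0 ≤ u) : 0 ≤ kernelProfile s u :=
  div_nonneg (le_min zero_le_one hu) (by positivity)

lemma kernelProfile_eq_min (s : ℝ) {u : ℝ} (hu : 0 < u) :
    kernelProfile s u = min (u ^ (-(1 + s))) (u ^ (-s)) := by
  rw [kernelProfile, ← min_div_div_right (by positivity), Real.rpow_neg hu.le,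
    Real.rpow_neg hu.le, Real.rpow_add hu, Real.rpow_one]
  field_simp

lemma kernelProfile_antitoneOn {s : ℝ} (hs : 0 ≤ s) : AntitoneOn (kernelProfile s) (Ioi 0) := by
  intro u hu v hv huv
  rw [kernelProfile_eq_min s hu, kernelProfile_eq_min s hv]
  exact min_le_min (Real.rpow_le_rpow_of_nonpos hu huv (by linarith))
    (Real.rpow_le_rpow_of_nonpos hu huv (by linarith))

@[fun_prop]
lemma measurable_kernelProfile (s : ℝ) : Measurable (kernelProfile s) := by
  unfold kernelProfile; fun_prop

lemma integrable_kernelProfile_norm_sq {E : Type*} [NormedAddCommGroup E] [NormedSpace ℝ E]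
    [Nontrivial E] [FiniteDimensional ℝ E] [MeasurableSpace E] [BorelSpace E]
    (μ : Measure E) [μ.IsAddHaarMeasure] {s : ℝ}
    (hs_lo : (Module.finrank ℝ E : ℝ) < 2 * s + 2) (hs_hi : 2 * s < Module.finrank ℝ E) :
    Integrable (fun x : E => kernelProfile s (‖x‖ ^ 2)) μ := by
  set d := Module.finrank ℝ E
  have hd : ((d - 1 : ℕ) : ℝ) = d - 1 := by
    rw [Nat.cast_sub Module.finrank_pos, Nat.cast_one]
  have hpow (a : ℝ) {y : ℝ} (hy : 0 < y) :
      y ^ (d - 1) * (y ^ 2) ^ a = y ^ ((d - 1 : ℕ) + 2 * a) := by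
    rw [Real.rpow_add hy, Real.rpow_natCast, Real.rpow_mul hy.le, Real.rpow_two]
  refine (integrable_fun_norm_addHaar μ (f := fun y => kernelProfile s (y ^ 2))).2 ?_
  have hmeas : AEStronglyMeasurable (fun y : ℝ => y ^ (d - 1) • kernelProfile s (y ^ 2)) := by
    fun_prop
  rw [← Ioc_union_Ioi_eq_Ioi zero_le_one]
  refine IntegrableOn.union ?_ ?_
  · have hint : IntegrableOn (fun y : ℝ => y ^ (((d - 1 : ℕ) : ℝ) + 2 * -s)) (Ioc 0 1) := by
      rw [← intervalIntegrable_iff_integrableOn_Ioc_of_le zero_le_one]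
      exact intervalIntegral.intervalIntegrable_rpow' (by rw [hd]; linarith)
    refine hint.mono' hmeas.restrict ((ae_restrict_iff' measurableSet_Ioc).2 (ae_of_all _ ?_))
    rintro y ⟨hy, -⟩
    have hy2 : 0 < y ^ 2 := by positivity
    rw [smul_eq_mul, Real.norm_of_nonneg (by positivity [kernelProfile_nonneg s hy2.le]),
      ← hpow _ hy, kernelProfile_eq_min s hy2]
    gcongr
    exact min_le_right _ _
  · have hint : IntegrableOn (fun y : ℝ => y ^ (((d - 1 : ℕ) : ℝ) + 2 * -(1 + s))) (Ioi 1) :=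
      integrableOn_Ioi_rpow_of_lt (by rw [hd]; linarith) zero_lt_one
    refine hint.mono' hmeas.restrict ((ae_restrict_iff' measurableSet_Ioi).2 (ae_of_all _ ?_))
    intro y (hy : 1 < y)
    have hy2 : 0 < y ^ 2 := by positivity
    rw [smul_eq_mul, Real.norm_of_nonneg (by positivity [kernelProfile_nonneg s hy2.le]),
      ← hpow _ (by positivity), kernelProfile_eq_min s hy2]
    gcongr
    exact min_le_left _ _

lemma norm_sq_le_fst_sq_add_snd_sq (z : ℝ × ℝ) : ‖z‖ ^ 2 ≤ z.1 ^ 2 + z.2 ^ 2 := by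
  rw [Prod.norm_def, Real.norm_eq_abs, Real.norm_eq_abs]
  rcases max_cases |z.1| |z.2| with ⟨h, -⟩ | ⟨h, -⟩ <;> rw [h, sq_abs] <;> nlinarith

lemma integrable_kernelProfile_sum_sq {s : ℝ} (hs0 : 0 < s) (hs1 : s < 1) :
    Integrable (fun z : ℝ × ℝ => kernelProfile s (z.1 ^ 2 + z.2 ^ 2)) := by
  have hdim : Module.finrank ℝ (ℝ × ℝ) = 2 := by simp
  have hradial := integrable_kernelProfile_norm_sq (E := ℝ × ℝ) volume (s := s)
    (by rw [hdim]; push_cast; linarith) (by rw [hdim]; push_cast; linarith)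
  refine hradial.mono' (by fun_prop : Measurable _).aestronglyMeasurable (ae_of_all _ fun z => ?_)
  rw [Real.norm_of_nonneg (kernelProfile_nonneg s (by positivity))]
  rcases eq_or_ne z 0 with rfl | hz
  · simp
  · have hpos : 0 < ‖z‖ ^ 2 := pow_pos (norm_pos_iff.2 hz) 2
    exact kernelProfile_antitoneOn hs0.le hpos (hpos.trans_le (norm_sq_le_fst_sq_add_snd_sq z))
      (norm_sq_le_fst_sq_add_snd_sq z)

lemma smul_fst_sq_add_smul_snd_sq (c : ℝ) (z : ℝ × ℝ) :
    (c • z).1 ^ 2 + (c • z).2 ^ 2 = c ^ 2 * (z.1 ^ 2 + z.2 ^ 2) := by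
  simp only [Prod.smul_fst, Prod.smul_snd, smul_eq_mul]; ring

lemma integrable_kernelProfile_mul_sum_sq {s K : ℝ} (hs0 : 0 < s) (hs1 : s < 1) (hK : 0 ≤ K) :
    Integrable (fun z : ℝ × ℝ => kernelProfile s (K * (z.1 ^ 2 + z.2 ^ 2))) := by
  rcases hK.eq_or_lt with rfl | hK
  · simp
  · have := (integrable_kernelProfile_sum_sq hs0 hs1).comp_smul (Real.sqrt_pos.2 hK).ne'
    simpa only [smul_fst_sq_add_smul_snd_sq, Real.sq_sqrt hK.le] using this

lemma integral_rpow_mul_kernelProfile_mul_sum_sq {s : ℝ} (hs0 : 0 < s) {K : ℝ} (hK : 0 ≤ K) :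
    ∫ z : ℝ × ℝ, K ^ (1 + s) * kernelProfile s (K * (z.1 ^ 2 + z.2 ^ 2)) =
      K ^ s * ∫ z : ℝ × ℝ, kernelProfile s (z.1 ^ 2 + z.2 ^ 2) := by
  have hscale := Measure.integral_comp_smul volume
    (fun z : ℝ × ℝ => kernelProfile s (z.1 ^ 2 + z.2 ^ 2)) (Real.sqrt K)
  simp only [smul_fst_sq_add_smul_snd_sq, Real.sq_sqrt hK, Module.finrank_prod,
    Module.finrank_self, smul_eq_mul, abs_inv, abs_of_nonneg hK] at hscale
  rw [integral_const_mul, hscale]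
  rcases hK.eq_or_lt with rfl | hK
  · simp [Real.zero_rpow hs0.ne']
  · rw [Real.rpow_add hK, Real.rpow_one]
    field_simp

lemma min_one_mul_div_rpow_eq (s : ℝ) {K u : ℝ} (hK : 0 ≤ K) (hu : 0 ≤ u) :
    min 1 (K * u) / u ^ (1 + s) = K ^ (1 + s) * kernelProfile s (K * u) := by
  rcases hK.eq_or_lt with rfl | hK
  · simp
  rcases hu.eq_or_lt with rfl | hu
  · simp
  rw [kernelProfile, Real.mul_rpow hK.le hu.le]
  field_simp

lemma Complex.norm_exp_sub_one_le_two_mul_min {w : ℂ} (hw : w.re ≤ 0) :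
    ‖exp w - 1‖ ≤ 2 * min 1 ‖w‖ := by
  have hle_two : ‖exp w - 1‖ ≤ 2 := by
    have : ‖exp w‖ ≤ 1 := by rw [norm_exp]; exact Real.exp_le_one_iff.2 hw
    linarith [norm_sub_le (exp w) 1, norm_one (α := ℂ)]
  rcases le_total ‖w‖ 1 with h | h
  · rw [min_eq_right h]; exact norm_exp_sub_one_le h
  · rw [min_eq_left h]; linarith

lemma norm_sq_I_mul_sub (k₁ k₂ x y : ℝ) :
    ‖I * k₁ * x - k₂ * y‖ ^ 2 = (k₁ * x) ^ 2 + (k₂ * y) ^ 2 := by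
  have : I * k₁ * x - k₂ * y = ((-(k₂ * y) : ℝ) : ℂ) + ((k₁ * x : ℝ) : ℂ) * I := by
    push_cast; ring
  rw [this, Complex.sq_norm, normSq_add_mul_I]
  ring

lemma integrand_le_kernelProfile (s : ℝ) {k₁ k₂ : ℝ} (hk₂ : 0 ≤ k₂) {z : ℝ × ℝ}
    (hz : 0 ≤ z.2) :
    ‖exp (I * k₁ * z.1 - k₂ * z.2) - 1‖ ^ 2 / (z.1 ^ 2 + z.2 ^ 2) ^ (1 + s) ≤
      4 * ((k₁ ^ 2 + k₂ ^ 2) ^ (1 + s) *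
        kernelProfile s ((k₁ ^ 2 + k₂ ^ 2) * (z.1 ^ 2 + z.2 ^ 2))) := by
  set w : ℂ := I * k₁ * z.1 - k₂ * z.2
  have hre : w.re ≤ 0 := by
    simp only [w, sub_re, mul_re, I_re, I_im, ofReal_re, ofReal_im]
    nlinarith [mul_nonneg hk₂ hz]
  have hw : ‖w‖ ^ 2 ≤ (k₁ ^ 2 + k₂ ^ 2) * (z.1 ^ 2 + z.2 ^ 2) := by
    rw [norm_sq_I_mul_sub]
    nlinarith [sq_nonneg (k₁ * z.2), sq_nonneg (k₂ * z.1)]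
  have hnum : ‖exp w - 1‖ ^ 2 ≤ 4 * min 1 ((k₁ ^ 2 + k₂ ^ 2) * (z.1 ^ 2 + z.2 ^ 2)) := by
    have hmin : 0 ≤ min 1 ‖w‖ := le_min zero_le_one (norm_nonneg w)
    calc ‖exp w - 1‖ ^ 2 ≤ (2 * min 1 ‖w‖) ^ 2 :=
          pow_le_pow_left₀ (norm_nonneg _) (norm_exp_sub_one_le_two_mul_min hre) 2
      _ = 4 * min 1 ‖w‖ ^ 2 := by ring
      _ ≤ 4 * min 1 ((k₁ ^ 2 + k₂ ^ 2) * (z.1 ^ 2 + z.2 ^ 2)) := by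
          gcongr
          refine le_min ?_ ((pow_le_pow_left₀ hmin (min_le_right _ _) 2).trans hw)
          nlinarith [min_le_left 1 ‖w‖]
  rw [← min_one_mul_div_rpow_eq s (by positivity) (by positivity), mul_div_assoc']
  gcongr

/-- For `0 < s < 1` there is a constant `C_s > 0` such that for all `k₁ ∈ ℝ` and
`k₂ ≥ 0`, the kernel integral
`J(k₁,k₂,s) = ∫₀^∞∫₀^∞ |e^{i k₁ z₁ - k₂ z₂} - 1|² / (z₁²+z₂²)^{1+s} dz₁ dz₂`
is finite and satisfies `J(k₁,k₂,s) ≤ C_s (k₁² + k₂²)^s`. -/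
theorem kernel_integral_bound (s : ℝ) (hs0 : 0 < s) (hs : s < 1) :
    ∃ C : ℝ, 0 < C ∧ ∀ k₁ k₂ : ℝ, 0 ≤ k₂ →
      IntegrableOn
        (fun z : ℝ × ℝ =>
          ‖Complex.exp (Complex.I * (k₁ : ℂ) * (z.1 : ℂ) - (k₂ : ℂ) * (z.2 : ℂ)) - 1‖ ^ 2 /
            (z.1 ^ 2 + z.2 ^ 2) ^ (1 + s))
        (Ioi (0:ℝ) ×ˢ Ioi (0:ℝ)) ∧
      (∫ z in Ioi (0:ℝ) ×ˢ Ioi (0:ℝ),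
          ‖Complex.exp (Complex.I * (k₁ : ℂ) * (z.1 : ℂ) - (k₂ : ℂ) * (z.2 : ℂ)) - 1‖ ^ 2 /
            (z.1 ^ 2 + z.2 ^ 2) ^ (1 + s)) ≤ C * (k₁ ^ 2 + k₂ ^ 2) ^ s := by
  set A := ∫ z : ℝ × ℝ, kernelProfile s (z.1 ^ 2 + z.2 ^ 2)
  have hA : 0 ≤ A := integral_nonneg fun z => kernelProfile_nonneg s (by positivity)
  refine ⟨4 * A + 1, by positivity, fun k₁ k₂ hk₂ => ?_⟩
  have hK : 0 ≤ k₁ ^ 2 + k₂ ^ 2 := by positivity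
  have hQ : MeasurableSet (Ioi (0:ℝ) ×ˢ Ioi (0:ℝ)) := measurableSet_Ioi.prod measurableSet_Ioi
  have hG := ((integrable_kernelProfile_mul_sum_sq hs0 hs hK).const_mul
    ((k₁ ^ 2 + k₂ ^ 2) ^ (1 + s))).const_mul 4
  have hle : ∀ z ∈ Ioi (0:ℝ) ×ˢ Ioi (0:ℝ), _ := fun z hz =>
    integrand_le_kernelProfile s (k₁ := k₁) hk₂ (le_of_lt hz.2)
  have hF : IntegrableOn _ (Ioi (0:ℝ) ×ˢ Ioi (0:ℝ)) :=
    hG.integrableOn.mono' (by fun_prop : Measurable _).aestronglyMeasurable <|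
      (ae_restrict_iff' hQ).2 <| ae_of_all _ fun z hz =>
        (Real.norm_of_nonneg (by positivity)).trans_le (hle z hz)
  refine ⟨hF, ?_⟩
  calc _ ≤ ∫ z in Ioi (0:ℝ) ×ˢ Ioi (0:ℝ), _ := setIntegral_mono_on hF hG.integrableOn hQ hle
    _ ≤ ∫ z, _ := setIntegral_le_integral hG <| ae_of_all _ fun z => by
        have := kernelProfile_nonneg s (mul_nonneg hK (add_nonneg (sq_nonneg z.1) (sq_nonneg z.2)))
        positivity
    _ = 4 * A * (k₁ ^ 2 + k₂ ^ 2) ^ s := by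
        rw [integral_const_mul, integral_rpow_mul_kernelProfile_mul_sum_sq hs0 hK]; ring
    _ ≤ (4 * A + 1) * (k₁ ^ 2 + k₂ ^ 2) ^ s := by gcongr; linarith
end

section
/- There exists a constant c > 0 such that for all x ≥ 0, all t ≠ 0 and all b > 0, |∫₀^b e^{-λx + iλ²t} dλ| ≤ c |t|^{-1/2}. Consequently, the improper integral N₂(x,t) = ∫₀^∞ e^{-λx + iλ²t} dλ converges for x > 0 and satisfies |N₂(x,t)| ≤ c |t|^{-1/2} with c independent of x. -/
/-!
Split `∫₀^b` at `δ = |t|^{-1/2}`. On `[0, δ]` the integrand has modulus at most `1`. On `[δ, b]` it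
is `u · v'` with `u λ = e^{-λx} / λ` nonnegative and decreasing and `v λ = e^{iλ²t} / (2it)` of
modulus `1 / (2|t|)`; after integrating by parts, the boundary terms and `∫ |u' v| ≤ (u δ - u b) / (2|t|)`
add up to at most `u δ / |t| ≤ 1 / (δ|t|) = δ`. Hence `c = 2` works. For `x > 0` the integrand is
dominated by `e^{-λx}`, so the improper integral converges and inherits the bound.
-/

open Complex Filter MeasureTheory Set intervalIntegral

section IntegrationByParts

variable {E : Type*} [NormedAddCommGroup E] [NormedSpace ℝ E] [CompleteSpace E]

theorem norm_integral_smul_deriv_le_of_deriv_nonpos {u u' : ℝ → ℝ} {v v' : ℝ → E} {a b M : ℝ}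
    (hab : a ≤ b) (hu : ∀ x ∈ Icc a b, HasDerivAt u (u' x) x)
    (hv : ∀ x ∈ Icc a b, HasDerivAt v (v' x) x)
    (hu' : IntervalIntegrable u' volume a b) (hv' : IntervalIntegrable v' volume a b)
    (hu'_nonpos : ∀ x ∈ Icc a b, u' x ≤ 0) (hub : 0 ≤ u b) (hvM : ∀ x ∈ Icc a b, ‖v x‖ ≤ M) :
    ‖∫ x in a..b, u x • v' x‖ ≤ 2 * M * u a := by
  rw [← uIcc_of_le hab] at hu hv
  have hFTC : ∫ x in a..b, -u' x = u a - u b := by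
    rw [intervalIntegral.integral_neg, integral_eq_sub_of_hasDerivAt hu hu']
    ring
  have hub_le : u b ≤ u a := by
    have : 0 ≤ ∫ x in a..b, -u' x := integral_nonneg hab fun x hx ↦ neg_nonneg.2 (hu'_nonpos x hx)
    linarith
  have hboundary : ‖u b • v b - u a • v a‖ ≤ M * u b + M * u a := by
    refine (norm_sub_le _ _).trans (add_le_add ?_ ?_) <;>
      rw [norm_smul, Real.norm_eq_abs, abs_of_nonneg (by linarith), mul_comm] <;>
      gcongr <;> first | linarith | exact hvM _ (by simp [hab])
  have hremainder : ‖∫ x in a..b, u' x • v x‖ ≤ M * (u a - u b) := by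
    calc ‖∫ x in a..b, u' x • v x‖ ≤ ∫ x in a..b, M * -u' x := by
          refine norm_integral_le_of_norm_le hab (ae_of_all _ fun x hx ↦ ?_) (hu'.neg.const_mul M)
          have hx' := Ioc_subset_Icc_self hx
          rw [norm_smul, Real.norm_eq_abs, abs_of_nonpos (hu'_nonpos x hx'), mul_comm]
          exact mul_le_mul_of_nonneg_right (hvM x hx') (neg_nonneg.2 (hu'_nonpos x hx'))
      _ = M * (u a - u b) := by rw [intervalIntegral.integral_const_mul, hFTC]
  rw [integral_smul_deriv_eq_deriv_smul hu hv hu' hv']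
  calc ‖u b • v b - u a • v a - ∫ x in a..b, u' x • v x‖
      ≤ ‖u b • v b - u a • v a‖ + ‖∫ x in a..b, u' x • v x‖ := norm_sub_le _ _
    _ ≤ M * u b + M * u a + M * (u a - u b) := add_le_add hboundary hremainder
    _ = 2 * M * u a := by ring

end IntegrationByParts

noncomputable def laplaceFresnelIntegrand (x t l : ℝ) : ℂ :=
  exp (-(l : ℂ) * x + I * (l : ℂ) ^ 2 * t)

section LaplaceFresnel

variable {x t : ℝ}

theorem continuous_laplaceFresnelIntegrand (x t : ℝ) :
    Continuous (laplaceFresnelIntegrand x t) := by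
  unfold laplaceFresnelIntegrand
  fun_prop

theorem norm_laplaceFresnelIntegrand (x t l : ℝ) :
    ‖laplaceFresnelIntegrand x t l‖ = Real.exp (-x * l) := by
  rw [laplaceFresnelIntegrand, norm_exp]
  simp [← ofReal_pow]
  ring

theorem norm_laplaceFresnelIntegrand_le_one (hx : 0 ≤ x) {l : ℝ} (hl : 0 ≤ l) :
    ‖laplaceFresnelIntegrand x t l‖ ≤ 1 := by
  rw [norm_laplaceFresnelIntegrand, Real.exp_le_one_iff, neg_mul, neg_nonpos]
  positivity

theorem laplaceFresnelIntegrand_eq_smul (x t : ℝ) {l : ℝ} (hl : l ≠ 0) :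
    laplaceFresnelIntegrand x t l = (Real.exp (-x * l) / l) • (l * exp (I * (l : ℂ) ^ 2 * t)) := by
  have hl' : (l : ℂ) ≠ 0 := ofReal_ne_zero.2 hl
  rw [laplaceFresnelIntegrand, real_smul, exp_add]
  push_cast
  field_simp

theorem hasDerivAt_exp_neg_mul_div_self (x : ℝ) {l : ℝ} (hl : l ≠ 0) :
    HasDerivAt (fun l ↦ Real.exp (-x * l) / l)
      (-(x * Real.exp (-x * l) * l + Real.exp (-x * l)) / l ^ 2) l :=
  (((hasDerivAt_id' l).const_mul (-x)).exp.fun_div (hasDerivAt_id' l) hl).congr_deriv (by ring)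

theorem hasDerivAt_cexp_I_mul_sq_div (ht : t ≠ 0) (l : ℝ) :
    HasDerivAt (fun l : ℝ ↦ exp (I * (l : ℂ) ^ 2 * t) / (2 * I * t))
      (l * exp (I * (l : ℂ) ^ 2 * t)) l := by
  have ht' : (t : ℂ) ≠ 0 := ofReal_ne_zero.2 ht
  refine ((((hasDerivAt_pow 2 (l : ℂ)).comp_ofReal.const_mul I).mul_const (t : ℂ)).cexp.div_const
    (2 * I * t)).congr_deriv ?_
  field_simp
  push_cast
  ring

theorem norm_integral_laplaceFresnelIntegrand_le_self (hx : 0 ≤ x) {b : ℝ} (hb : 0 ≤ b) :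
    ‖∫ l in (0 : ℝ)..b, laplaceFresnelIntegrand x t l‖ ≤ b := by
  simpa [abs_of_nonneg hb] using norm_integral_le_of_norm_le_const (a := 0) (b := b) fun l hl ↦
    norm_laplaceFresnelIntegrand_le_one (t := t) hx (uIoc_of_le hb ▸ hl).1.le

theorem norm_integral_laplaceFresnelIntegrand_le_inv (hx : 0 ≤ x) (ht : t ≠ 0) {a b : ℝ}
    (ha : 0 < a) (hab : a ≤ b) :
    ‖∫ l in a..b, laplaceFresnelIntegrand x t l‖ ≤ (a * |t|)⁻¹ := by
  have hpos : ∀ l ∈ Icc a b, 0 < l := fun l hl ↦ ha.trans_le hl.1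
  have hsmul : EqOn (laplaceFresnelIntegrand x t)
      (fun l ↦ (Real.exp (-x * l) / l) • (l * exp (I * (l : ℂ) ^ 2 * t))) (uIcc a b) :=
    fun l hl ↦ laplaceFresnelIntegrand_eq_smul x t (hpos l (uIcc_of_le hab ▸ hl)).ne'
  have hu'_nonpos : ∀ l ∈ Icc a b, -(x * Real.exp (-x * l) * l + Real.exp (-x * l)) / l ^ 2 ≤ 0 :=
    fun l hl ↦ by
      have := hpos l hl
      exact div_nonpos_of_nonpos_of_nonneg (neg_nonpos.2 (by positivity)) (sq_nonneg l)
  have hvM : ∀ l ∈ Icc a b, ‖exp (I * (l : ℂ) ^ 2 * t) / (2 * I * t)‖ ≤ (2 * |t|)⁻¹ :=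
    fun l _ ↦ by simp [norm_exp, ← ofReal_pow]
  rw [integral_congr hsmul]
  calc _ ≤ 2 * (2 * |t|)⁻¹ * (Real.exp (-x * a) / a) :=
        norm_integral_smul_deriv_le_of_deriv_nonpos (u := fun l ↦ Real.exp (-x * l) / l) hab
          (fun l hl ↦ hasDerivAt_exp_neg_mul_div_self x (hpos l hl).ne')
          (fun l _ ↦ hasDerivAt_cexp_I_mul_sq_div ht l)
          (ContinuousOn.intervalIntegrable_of_Icc hab <| ContinuousOn.div (by fun_prop)
            (by fun_prop) fun l hl ↦ pow_ne_zero 2 (hpos l hl).ne')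
          ((continuous_ofReal.mul (by fun_prop)).intervalIntegrable a b)
          hu'_nonpos (div_nonneg (Real.exp_pos _).le (ha.trans_le hab).le) hvM
    _ ≤ (a * |t|)⁻¹ := by
      have := abs_pos.2 ht
      field_simp
      exact Real.exp_le_one_iff.2 (by nlinarith)

theorem norm_integral_laplaceFresnelIntegrand_le (hx : 0 ≤ x) (ht : t ≠ 0) {b : ℝ} (hb : 0 ≤ b) :
    ‖∫ l in (0 : ℝ)..b, laplaceFresnelIntegrand x t l‖ ≤ 2 * |t| ^ (-(1 / 2) : ℝ) := by
  set δ := |t| ^ (-(1 / 2) : ℝ)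
  have hδ : 0 < δ := Real.rpow_pos_of_pos (abs_pos.2 ht) _
  have hδt : (δ * |t|)⁻¹ = δ := by
    rw [← Real.rpow_add_one (abs_ne_zero.2 ht), ← Real.rpow_neg (abs_nonneg t)]
    norm_num [δ]
  rcases le_total b δ with hbδ | hδb
  · linarith [norm_integral_laplaceFresnelIntegrand_le_self (t := t) hx hb]
  have hint : ∀ c d, IntervalIntegrable (laplaceFresnelIntegrand x t) volume c d :=
    (continuous_laplaceFresnelIntegrand x t).intervalIntegrable
  calc ‖∫ l in (0 : ℝ)..b, laplaceFresnelIntegrand x t l‖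
      = ‖(∫ l in (0 : ℝ)..δ, laplaceFresnelIntegrand x t l) +
          ∫ l in δ..b, laplaceFresnelIntegrand x t l‖ := by
        rw [integral_add_adjacent_intervals (hint _ _) (hint _ _)]
    _ ≤ δ + (δ * |t|)⁻¹ := (norm_add_le _ _).trans <| add_le_add
        (norm_integral_laplaceFresnelIntegrand_le_self hx hδ.le)
        (norm_integral_laplaceFresnelIntegrand_le_inv hx ht hδ hδb)
    _ = 2 * δ := by rw [hδt]; ring

theorem integrableOn_laplaceFresnelIntegrand (t : ℝ) (hx : 0 < x) :
    IntegrableOn (laplaceFresnelIntegrand x t) (Ioi 0) :=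
  (exp_neg_integrableOn_Ioi 0 hx).mono'
    (continuous_laplaceFresnelIntegrand x t).aestronglyMeasurable.restrict
    (ae_of_all _ fun l ↦ (norm_laplaceFresnelIntegrand x t l).le)

end LaplaceFresnel

/-- Van der Corput-type bound: there is `c > 0`, independent of `x`, `t` and `b`,
such that `|∫₀^b e^{-λx + iλ²t} dλ| ≤ c |t|^{-1/2}` for all `x ≥ 0`, `t ≠ 0`, `b > 0`;
consequently the improper integral `N₂(x,t) = ∫₀^∞ e^{-λx + iλ²t} dλ` converges for
`x > 0` and obeys the same bound. -/
theorem laplace_fresnel_bound :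
    ∃ c : ℝ, 0 < c ∧
      (∀ x t b : ℝ, 0 ≤ x → t ≠ 0 → 0 < b →
        ‖∫ l in (0:ℝ)..b,
            Complex.exp (-(l : ℂ) * (x : ℂ) + Complex.I * (l : ℂ) ^ 2 * (t : ℂ))‖ ≤
          c * |t| ^ (-(1/2) : ℝ)) ∧
      (∀ x t : ℝ, 0 < x → t ≠ 0 → ∃ L : ℂ,
        Tendsto (fun b : ℝ => ∫ l in (0:ℝ)..b,
            Complex.exp (-(l : ℂ) * (x : ℂ) + Complex.I * (l : ℂ) ^ 2 * (t : ℂ)))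
          atTop (nhds L) ∧
        ‖L‖ ≤ c * |t| ^ (-(1/2) : ℝ)) := by
  refine ⟨2, two_pos, fun x t b hx ht hb ↦ norm_integral_laplaceFresnelIntegrand_le hx ht hb.le,
    fun x t hx ht ↦ ?_⟩
  have hlim := intervalIntegral_tendsto_integral_Ioi 0
    (integrableOn_laplaceFresnelIntegrand t hx) tendsto_id
  refine ⟨_, hlim, le_of_tendsto hlim.norm ?_⟩
  filter_upwards [eventually_ge_atTop 0] with b hb
  exact norm_integral_laplaceFresnelIntegrand_le hx.le ht hb
end

section
/- Let T > 0, k₂ ∈ ℝ, x₁ > 0 and 0 ≤ t ≤ T. Suppose h : [0,T] → ℂ is C¹. For R > |k₂|, parametrize the quarter circle C̃_R = {R e^{iθ} : 0 ≤ θ ≤ π/2} in the first quadrant of the complex plane. Then |∫_{C̃_R} e^{i k₁ x₁ - i(k₁² + k₂²)t} k₁ ∫_t^T e^{i(k₁² + k₂²)t'} h(t') dt' dk₁| ≤ C(h) · R²/(R² - k₂²) · (π/(2 R x₁)) (1 - e^{-R x₁}), where C(h) = 2 sup_{[0,T]}|h| + ∫₀^T |h'|. In particular the contour integral tends to 0 as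 R → ∞. -/
/-! Integrating by parts in `t'`, the inner integral becomes boundary terms plus an integral
of `h'`, each of size at most `e^{-Im q · t} / |q|` for `q = k₁² + k₂²`, since `Im q = Im k₁² ≥ 0`
in the first quadrant. This decay cancels the factor `e^{-i q t}`, and `|q| ≥ R² - k₂²`, so the
integrand is at most `C(h) R²/(R² - k₂²) |e^{i k₁ x₁}|`. On the arc
`|e^{i k₁ x₁}| = e^{-R x₁ sin θ} ≤ e^{-2 R x₁ θ / π}` by Jordan's inequality, and the integral
of the latter over `[0, π/2]` is `π/(2 R x₁) (1 - e^{-R x₁})`. -/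

open Complex Real Filter Topology Set

/-- The integral over the quarter circle `C̃_R = {R e^{iθ} : 0 ≤ θ ≤ π/2}` of
`e^{i k₁ x₁ - i(k₁²+k₂²)t} k₁ ∫_t^T e^{i(k₁²+k₂²)t'} h(t') dt' dk₁`,
parametrized by `k₁ = R e^{iθ}`, `dk₁ = i k₁ dθ`. -/
noncomputable def arcIntegral (k₂ x₁ t T : ℝ) (h : ℝ → ℂ) (R : ℝ) : ℂ :=
  ∫ θ in (0:ℝ)..(π / 2),
    (fun k₁ : ℂ =>
        Complex.exp (Complex.I * k₁ * (x₁ : ℂ) -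
            Complex.I * (k₁ ^ 2 + (k₂ : ℂ) ^ 2) * (t : ℂ)) *
          k₁ *
          (∫ t' in t..T,
            Complex.exp (Complex.I * (k₁ ^ 2 + (k₂ : ℂ) ^ 2) * (t' : ℂ)) * h t') *
          (Complex.I * k₁))
      ((R : ℂ) * Complex.exp (Complex.I * (θ : ℂ)))

open MeasureTheory

theorem ContinuousOn.le_iSup_of_isCompact {X : Type*} [TopologicalSpace X] {s : Set X}
    {f : X → ℝ} (hs : IsCompact s) (hf : ContinuousOn f s) {x : X} (hx : x ∈ s) :
    f x ≤ ⨆ u : s, f u :=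
  le_ciSup (f := fun u : s => f u) (by simpa [image_eq_range] using hs.bddAbove_image hf) ⟨x, hx⟩

theorem ContDiffOn.hasDerivAt_derivWithin_Icc {E : Type*} [NormedAddCommGroup E]
    [NormedSpace ℝ E] {h : ℝ → E} {a b s : ℝ} (hh : ContDiffOn ℝ 1 h (Icc a b))
    (hs : s ∈ Ioo a b) : HasDerivAt h (derivWithin h (Icc a b) s) s :=
  (hh.differentiableOn one_ne_zero s (Ioo_subset_Icc_self hs)).hasDerivWithinAt.hasDerivAt
    (Icc_mem_nhds hs.1 hs.2)

theorem integral_cexp_mul_eq_by_parts {a b : ℝ} {q : ℂ} {h h' : ℝ → ℂ} (hab : a ≤ b) (hq : q ≠ 0)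
    (hcont : ContinuousOn h (Icc a b)) (hderiv : ∀ s ∈ Ioo a b, HasDerivAt h (h' s) s)
    (hint : IntervalIntegrable h' volume a b) :
    ∫ s in a..b, cexp (I * q * s) * h s =
      (cexp (I * q * b) * h b - cexp (I * q * a) * h a -
        ∫ s in a..b, cexp (I * q * s) * h' s) / (I * q) := by
  have hIq : I * q ≠ 0 := mul_ne_zero I_ne_zero hq
  have hexp (s : ℝ) :
      HasDerivAt (fun s : ℝ => cexp (I * q * s) / (I * q)) (cexp (I * q * s)) s := by
    simpa [hIq] using
      (((hasDerivAt_id (s : ℂ)).const_mul (I * q)).cexp.comp_ofReal).div_const (I * q)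
  have hparts := intervalIntegral.integral_mul_deriv_eq_deriv_mul_of_hasDerivAt
    (v := fun s : ℝ => cexp (I * q * s) / (I * q))
    (by rwa [uIcc_of_le hab]) (by fun_prop) (by simpa [hab] using hderiv) (fun s _ => hexp s) hint
    ((by fun_prop : Continuous fun s : ℝ => cexp (I * q * s)).intervalIntegrable a b)
  simp_rw [mul_comm (cexp _) (h _), mul_comm (cexp _) (h' _), hparts, ← mul_div_assoc,
    intervalIntegral.integral_div]
  ring

theorem norm_cexp_I_mul_mul_ofReal (q : ℂ) (s : ℝ) :
    ‖cexp (I * q * s)‖ = Real.exp (-(q.im * s)) := by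
  simp [Complex.norm_exp, Complex.mul_re]

theorem norm_integral_cexp_mul_le {a b : ℝ} {q : ℂ} {h h' : ℝ → ℂ} (hab : a ≤ b) (hq : q ≠ 0)
    (hq_im : 0 ≤ q.im) (hcont : ContinuousOn h (Icc a b))
    (hderiv : ∀ s ∈ Ioo a b, HasDerivAt h (h' s) s) (hint : IntervalIntegrable h' volume a b) :
    ‖∫ s in a..b, cexp (I * q * s) * h s‖ ≤
      Real.exp (-(q.im * a)) * (‖h b‖ + ‖h a‖ + ∫ s in a..b, ‖h' s‖) / ‖q‖ := by
  set E := Real.exp (-(q.im * a))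
  have hdecay : ∀ s, a ≤ s → ‖cexp (I * q * s)‖ ≤ E := fun s hs => by
    rw [norm_cexp_I_mul_mul_ofReal]
    exact Real.exp_le_exp.2 (by nlinarith)
  have hK : ‖∫ s in a..b, cexp (I * q * s) * h' s‖ ≤ E * ∫ s in a..b, ‖h' s‖ := by
    rw [← intervalIntegral.integral_const_mul]
    refine intervalIntegral.norm_integral_le_of_norm_le hab (ae_of_all _ fun s hs => ?_)
      (hint.norm.const_mul E)
    rw [norm_mul]
    exact mul_le_mul_of_nonneg_right (hdecay s hs.1.le) (norm_nonneg _)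
  rw [integral_cexp_mul_eq_by_parts hab hq hcont hderiv hint, norm_div, norm_mul, norm_I, one_mul]
  gcongr
  calc _ ≤ ‖cexp (I * q * b) * h b‖ + ‖cexp (I * q * a) * h a‖ +
        ‖∫ s in a..b, cexp (I * q * s) * h' s‖ :=
        (norm_sub_le _ _).trans (add_le_add_left (norm_sub_le _ _) _)
    _ ≤ E * ‖h b‖ + E * ‖h a‖ + E * ∫ s in a..b, ‖h' s‖ := by
        simp only [norm_mul]
        gcongr
        exacts [hdecay b hab, hdecay a le_rfl]
    _ = _ := by ring

theorem norm_ofReal_mul_cexp_I_mul {R : ℝ} (hR : 0 ≤ R) (θ : ℝ) :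
    ‖(R : ℂ) * cexp (I * θ)‖ = R := by
  rw [norm_mul, norm_exp_I_mul_ofReal, norm_real, Real.norm_of_nonneg hR, mul_one]

theorem re_ofReal_mul_cexp_I_mul (R θ : ℝ) : ((R : ℂ) * cexp (I * θ)).re = R * Real.cos θ := by
  simp [Complex.exp_re]

theorem im_ofReal_mul_cexp_I_mul (R θ : ℝ) : ((R : ℂ) * cexp (I * θ)).im = R * Real.sin θ := by
  simp [Complex.exp_im, mul_comm]

theorem im_sq_ofReal_mul_cexp_I_mul_nonneg {R θ : ℝ} (hθ : θ ∈ Icc 0 (π / 2)) :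
    0 ≤ (((R : ℂ) * cexp (I * θ)) ^ 2).im := by
  have hcos : 0 ≤ Real.cos θ := Real.cos_nonneg_of_mem_Icc ⟨by linarith [hθ.1, pi_pos], hθ.2⟩
  have hsin : 0 ≤ Real.sin θ := Real.sin_nonneg_of_nonneg_of_le_pi hθ.1 (by linarith [hθ.2, pi_pos])
  rw [sq, mul_im, re_ofReal_mul_cexp_I_mul, im_ofReal_mul_cexp_I_mul]
  nlinarith [mul_nonneg (mul_self_nonneg R) (mul_nonneg hcos hsin)]

theorem mul_two_div_pi_mul_le_im_ofReal_mul_cexp_I_mul {R θ : ℝ} (hR : 0 ≤ R)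
    (hθ : θ ∈ Icc 0 (π / 2)) :
    R * (2 / π * θ) ≤ ((R : ℂ) * cexp (I * θ)).im := by
  rw [im_ofReal_mul_cexp_I_mul]
  exact mul_le_mul_of_nonneg_left (Real.mul_le_sin hθ.1 hθ.2) hR

theorem integral_exp_neg_two_mul_div_pi_mul {c : ℝ} (hc : c ≠ 0) :
    ∫ θ in (0:ℝ)..π / 2, Real.exp (-(2 * c / π) * θ) = π / (2 * c) * (1 - Real.exp (-c)) := by
  have ha : -(2 * c / π) ≠ 0 := by simp [hc, pi_ne_zero]
  rw [intervalIntegral.integral_comp_mul_left (fun y => Real.exp y) ha, integral_exp, mul_zero,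
    Real.exp_zero, smul_eq_mul]
  field_simp
  ring

noncomputable def arcIntegrand (k₂ x₁ t T : ℝ) (h : ℝ → ℂ) (k₁ : ℂ) : ℂ :=
  cexp (I * k₁ * x₁ - I * (k₁ ^ 2 + (k₂ : ℂ) ^ 2) * t) * k₁ *
    (∫ t' in t..T, cexp (I * (k₁ ^ 2 + (k₂ : ℂ) ^ 2) * t') * h t') * (I * k₁)

theorem arcIntegral_eq_integral_arcIntegrand (k₂ x₁ t T : ℝ) (h : ℝ → ℂ) (R : ℝ) :
    arcIntegral k₂ x₁ t T h R =
      ∫ θ in (0:ℝ)..π / 2, arcIntegrand k₂ x₁ t T h (R * cexp (I * θ)) :=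
  rfl

theorem norm_arcIntegrand_le {k₂ x₁ t T : ℝ} {h h' : ℝ → ℂ} {k : ℂ} (htT : t ≤ T)
    (hcont : ContinuousOn h (Icc t T)) (hderiv : ∀ s ∈ Ioo t T, HasDerivAt h (h' s) s)
    (hint : IntervalIntegrable h' volume t T) (hk_sq : 0 ≤ (k ^ 2).im) (hk : k₂ ^ 2 < ‖k‖ ^ 2) :
    ‖arcIntegrand k₂ x₁ t T h k‖ ≤
      (‖h T‖ + ‖h t‖ + ∫ s in t..T, ‖h' s‖) * (‖k‖ ^ 2 / (‖k‖ ^ 2 - k₂ ^ 2)) *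
        Real.exp (-(k.im * x₁)) := by
  set q := k ^ 2 + (k₂ : ℂ) ^ 2
  have hq_im : 0 ≤ q.im := by simpa [q, ← ofReal_pow] using hk_sq
  have hq_norm : ‖k‖ ^ 2 - k₂ ^ 2 ≤ ‖q‖ := by
    have := norm_sub_le_norm_add (k ^ 2) ((k₂ : ℂ) ^ 2)
    rwa [norm_pow, norm_pow, norm_real, Real.norm_eq_abs, sq_abs] at this
  have hq : q ≠ 0 := norm_pos_iff.1 (by linarith)
  set C₀ := ‖h T‖ + ‖h t‖ + ∫ s in t..T, ‖h' s‖
  have hC₀ : 0 ≤ C₀ := by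
    have hint_nonneg := intervalIntegral.integral_nonneg (μ := volume) htT fun s _ =>
      norm_nonneg (h' s)
    positivity
  have hexp : ‖cexp (I * k * x₁ - I * q * t)‖ = Real.exp (-(k.im * x₁)) * Real.exp (q.im * t) := by
    rw [Complex.norm_exp, ← Real.exp_add]
    simp [Complex.mul_re]
  calc ‖arcIntegrand k₂ x₁ t T h k‖
      = Real.exp (-(k.im * x₁)) * Real.exp (q.im * t) *
          ‖∫ s in t..T, cexp (I * q * s) * h s‖ * ‖k‖ ^ 2 := by
        change ‖cexp (I * k * x₁ - I * q * t) * k * (∫ s in t..T, cexp (I * q * s) * h s) *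
          (I * k)‖ = _
        simp only [norm_mul, hexp, norm_I, one_mul]
        ring
    _ ≤ Real.exp (-(k.im * x₁)) * Real.exp (q.im * t) *
          (Real.exp (-(q.im * t)) * C₀ / ‖q‖) * ‖k‖ ^ 2 := by
        gcongr
        exact norm_integral_cexp_mul_le htT hq hq_im hcont hderiv hint
    _ = C₀ * (‖k‖ ^ 2 / ‖q‖) * Real.exp (-(k.im * x₁)) := by
        rw [Real.exp_neg (q.im * t)]
        field_simp
    _ ≤ C₀ * (‖k‖ ^ 2 / (‖k‖ ^ 2 - k₂ ^ 2)) * Real.exp (-(k.im * x₁)) := by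
        gcongr

theorem norm_arcIntegral_le {k₂ x₁ t T R : ℝ} {h h' : ℝ → ℂ} (htT : t ≤ T)
    (hcont : ContinuousOn h (Icc t T)) (hderiv : ∀ s ∈ Ioo t T, HasDerivAt h (h' s) s)
    (hint : IntervalIntegrable h' volume t T) (hx₁ : 0 < x₁) (hR : |k₂| < R) :
    ‖arcIntegral k₂ x₁ t T h R‖ ≤
      (‖h T‖ + ‖h t‖ + ∫ s in t..T, ‖h' s‖) * (R ^ 2 / (R ^ 2 - k₂ ^ 2)) *
        (π / (2 * R * x₁) * (1 - Real.exp (-(R * x₁)))) := by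
  have hR₀ : 0 < R := (abs_nonneg k₂).trans_lt hR
  have hk₂ : k₂ ^ 2 < R ^ 2 := sq_lt_sq' (neg_lt_of_abs_lt hR) (lt_of_abs_lt hR)
  set M := (‖h T‖ + ‖h t‖ + ∫ s in t..T, ‖h' s‖) * (R ^ 2 / (R ^ 2 - k₂ ^ 2))
  have hM : 0 ≤ M := by
    have hint_nonneg := intervalIntegral.integral_nonneg (μ := volume) htT fun s _ =>
      norm_nonneg (h' s)
    have hk₂' : 0 < R ^ 2 - k₂ ^ 2 := by linarith
    positivity
  have hpointwise : ∀ θ ∈ Icc 0 (π / 2), ‖arcIntegrand k₂ x₁ t T h (R * cexp (I * θ))‖ ≤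
      M * Real.exp (-(2 * (R * x₁) / π) * θ) := fun θ hθ => by
    have hk := norm_ofReal_mul_cexp_I_mul hR₀.le θ
    refine (norm_arcIntegrand_le htT hcont hderiv hint (im_sq_ofReal_mul_cexp_I_mul_nonneg hθ)
      (by rwa [hk])).trans ?_
    rw [hk]
    gcongr
    have hjordan := mul_two_div_pi_mul_le_im_ofReal_mul_cexp_I_mul hR₀.le hθ
    rw [show -(2 * (R * x₁) / π) * θ = -(R * (2 / π * θ) * x₁) by ring, neg_le_neg_iff]
    gcongr
  rw [arcIntegral_eq_integral_arcIntegrand]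
  calc _ ≤ ∫ θ in (0:ℝ)..π / 2, M * Real.exp (-(2 * (R * x₁) / π) * θ) :=
        intervalIntegral.norm_integral_le_of_norm_le (by positivity)
          (ae_of_all _ fun θ hθ => hpointwise θ (Ioc_subset_Icc_self hθ))
          (by apply Continuous.intervalIntegrable; fun_prop)
    _ = _ := by
        rw [intervalIntegral.integral_const_mul,
          integral_exp_neg_two_mul_div_pi_mul (by positivity), mul_assoc 2 R x₁]

theorem tendsto_arcIntegral_bound_factor {k₂ x₁ : ℝ} (hx₁ : 0 < x₁) :
    Tendsto (fun R : ℝ => R ^ 2 / (R ^ 2 - k₂ ^ 2) *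
      (π / (2 * R * x₁) * (1 - Real.exp (-(R * x₁))))) atTop (𝓝 0) := by
  have hratio : Tendsto (fun R : ℝ => R ^ 2 / (R ^ 2 - k₂ ^ 2)) atTop (𝓝 1) := by
    have hinv : Tendsto (fun R : ℝ => (1 - k₂ ^ 2 / R ^ 2)⁻¹) atTop (𝓝 (1 - 0)⁻¹) :=
      (tendsto_const_nhds.sub
        (tendsto_const_nhds.div_atTop (tendsto_pow_atTop two_ne_zero))).inv₀ (by norm_num)
    rw [sub_zero, inv_one] at hinv
    refine hinv.congr' ((eventually_ne_atTop 0).mono fun R hR => ?_)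
    rw [one_sub_div (pow_ne_zero 2 hR), inv_div]
  have hRx₁ : Tendsto (fun R : ℝ => R * x₁) atTop atTop := tendsto_id.atTop_mul_const hx₁
  have hfactor : Tendsto (fun R : ℝ => π / (2 * R * x₁)) atTop (𝓝 0) := by
    simpa only [mul_assoc] using
      tendsto_const_nhds.div_atTop (hRx₁.const_mul_atTop two_pos)
  have hexp : Tendsto (fun R : ℝ => 1 - Real.exp (-(R * x₁))) atTop (𝓝 (1 - 0)) :=
    tendsto_const_nhds.sub (Real.tendsto_exp_neg_atTop_nhds_zero.comp hRx₁)
  simpa using hratio.mul (hfactor.mul hexp)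

/-- Quarter-circle decay lemma: for `h` of class `C¹` on `[0,T]`, `x₁ > 0`,
`0 ≤ t ≤ T` and `R > |k₂|`, the quarter-circle contour integral is bounded by
`C(h) · R²/(R²-k₂²) · (π/(2Rx₁))(1 - e^{-Rx₁})` with
`C(h) = 2 sup_{[0,T]} ‖h‖ + ∫₀^T ‖h'‖`; in particular it tends to `0` as `R → ∞`. -/
theorem quarter_circle_decay (T k₂ x₁ t : ℝ) (hT : 0 < T) (hx₁ : 0 < x₁)
    (ht0 : 0 ≤ t) (htT : t ≤ T) (h : ℝ → ℂ) (hh : ContDiffOn ℝ 1 h (Icc 0 T)) :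
    (∀ R : ℝ, |k₂| < R →
      ‖arcIntegral k₂ x₁ t T h R‖ ≤
        (2 * (⨆ u : Icc (0:ℝ) T, ‖h u‖) +
            ∫ u in (0:ℝ)..T, ‖derivWithin h (Icc 0 T) u‖) *
          (R ^ 2 / (R ^ 2 - k₂ ^ 2)) *
          (π / (2 * R * x₁) * (1 - Real.exp (-(R * x₁))))) ∧
    Tendsto (fun R : ℝ => arcIntegral k₂ x₁ t T h R) atTop (𝓝 0) := by
  set h' := derivWithin h (Icc 0 T)
  set C := 2 * (⨆ u : Icc (0:ℝ) T, ‖h u‖) + ∫ u in (0:ℝ)..T, ‖h' u‖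
  have hh' : ContinuousOn h' (Icc 0 T) := hh.continuousOn_derivWithin (uniqueDiffOn_Icc hT) le_rfl
  have hC : ‖h T‖ + ‖h t‖ + ∫ s in t..T, ‖h' s‖ ≤ C := by
    have hhT := hh.continuousOn.norm.le_iSup_of_isCompact isCompact_Icc (right_mem_Icc.2 hT.le)
    have hht := hh.continuousOn.norm.le_iSup_of_isCompact isCompact_Icc ⟨ht0, htT⟩
    have hh'_int := intervalIntegral.integral_mono_interval (μ := volume) ht0 htT le_rfl
      (ae_of_all _ fun s => norm_nonneg (h' s)) (hh'.norm.intervalIntegrable_of_Icc hT.le)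
    linarith
  have hbound : ∀ R : ℝ, |k₂| < R → ‖arcIntegral k₂ x₁ t T h R‖ ≤
      C * (R ^ 2 / (R ^ 2 - k₂ ^ 2)) * (π / (2 * R * x₁) * (1 - Real.exp (-(R * x₁)))) :=
    fun R hR => by
      have hk₂ : k₂ ^ 2 < R ^ 2 := sq_lt_sq' (neg_lt_of_abs_lt hR) (lt_of_abs_lt hR)
      have hR₀ : 0 < R := (abs_nonneg k₂).trans_lt hR
      have hexp : Real.exp (-(R * x₁)) ≤ 1 := Real.exp_le_one_iff.2 (by nlinarith)
      refine (norm_arcIntegral_le htT (hh.continuousOn.mono (Icc_subset_Icc ht0 le_rfl))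
        (fun s hs => hh.hasDerivAt_derivWithin_Icc ⟨ht0.trans_lt hs.1, hs.2⟩)
        ((hh'.mono (Icc_subset_Icc ht0 le_rfl)).intervalIntegrable_of_Icc htT) hx₁ hR).trans ?_
      gcongr
  refine ⟨hbound, squeeze_zero_norm' ?_
    (by simpa using (tendsto_arcIntegral_bound_factor (k₂ := k₂) hx₁).const_mul C)⟩
  filter_upwards [eventually_gt_atTop |k₂|] with R hR
  rw [← mul_assoc]
  exact hbound R hR
end
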